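/- Consider n ≥ 2 bidders with values v_1 ≥ ... ≥ v_n > 2/c, weight f(x) = e^{cx} - 1, c > 0. Then there exists a pure-strategy Nash equilibrium bid vector b* with b*_i ≥ v_{max(i,2)} - 2/c for all i, i.e., b*_1 ≥ v_2 - 2/c and b*_i ≥ v_i - 2/c for i ≥ 2, and b*_i ≤ v_i for all i. -/

import Mathlib

/-!
The payoff `(V - x) f(x) / (f(x) + S)` of a bid `x` against rival weight `S` has derivative of
the sign of `-foc c V S x`, and `foc` is strictly increasing in the bid and antitone in `S`.
So the best response is the right end of the sublevel set `{foc ≤ 0}` and increases with `S`: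
the best-response map is monotone, and Tarski's theorem gives a fixed point in the box
`∏ i, [v_{max(i,2)} - 2/c, v_i]`. The box is preserved because every bidder faces a rival
bidding at least `v_{max(i,2)} - 2/c`, and against such a rival `foc` is nonpositive `2/c` below
one's value.
-/

open Real Set

noncomputable section

namespace QuasiProportionalAuction

theorem isMaxOn_Icc_of_hasDerivAt {g g' : ℝ → ℝ} {a b m : ℝ} (hm : m ∈ Icc a b)
    (hg : ContinuousOn g (Icc a b)) (hderiv : ∀ x ∈ Ioo a b, HasDerivAt g (g' x) x)
    (hinc : ∀ x ∈ Ioo a m, 0 ≤ g' x) (hdec : ∀ x ∈ Ioo m b, g' x ≤ 0) :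
    IsMaxOn g (Icc a b) m := by
  have hmono : MonotoneOn g (Icc a m) := by
    refine monotoneOn_of_hasDerivWithinAt_nonneg (f' := g') (convex_Icc a m)
      (hg.mono (Icc_subset_Icc_right hm.2)) (fun x hx => ?_) (fun x hx => ?_)
    · rw [interior_Icc] at hx ⊢
      exact (hderiv x ⟨hx.1, hx.2.trans_le hm.2⟩).hasDerivWithinAt
    · rw [interior_Icc] at hx
      exact hinc x hx
  have hanti : AntitoneOn g (Icc m b) := by
    refine antitoneOn_of_hasDerivWithinAt_nonpos (f' := g') (convex_Icc m b)
      (hg.mono (Icc_subset_Icc_left hm.1)) (fun x hx => ?_) (fun x hx => ?_)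
    · rw [interior_Icc] at hx ⊢
      exact (hderiv x ⟨hm.1.trans_lt hx.1, hx.2⟩).hasDerivWithinAt
    · rw [interior_Icc] at hx
      exact hdec x hx
  refine isMaxOn_iff.2 fun y hy => ?_
  rcases le_total y m with h | h
  · exact hmono ⟨hy.1, h⟩ ⟨hm.1, le_rfl⟩ h
  · exact hanti ⟨le_rfl, hm.2⟩ ⟨h, hy.2⟩ h

theorem exists_fixedPoint_of_monotoneOn_Icc {α : Type*} [ConditionallyCompleteLattice α]
    {l u : α} (hlu : l ≤ u) {F : α → α} (hF : MonotoneOn F (Icc l u))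
    (hmaps : MapsTo F (Icc l u) (Icc l u)) : ∃ b ∈ Icc l u, F b = b := by
  have : Fact (l ≤ u) := ⟨hlu⟩
  let G : Icc l u →o Icc l u := ⟨hmaps.restrict, fun p q hpq => hF p.2 q.2 hpq⟩
  exact ⟨G.lfp, G.lfp.2, congrArg Subtype.val G.map_lfp⟩

def utility (c V S x : ℝ) : ℝ := (V - x) * (exp (c * x) - 1) / (exp (c * x) - 1 + S)

/-- The first-order condition for `utility c V S`, rescaled to be monotone in both `x` and `S`. -/
def foc (c V S x : ℝ) : ℝ :=
  (1 - exp (-(c * x))) * (exp (c * x) - 1) / S + (1 - exp (-(c * x))) - c * (V - x)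

def bestResponse (c V S : ℝ) : ℝ := sSup {x ∈ Icc 0 V | foc c V S x ≤ 0}

variable {c V S x : ℝ}

theorem foc_strictMonoOn (hc : 0 < c) (hS : 0 < S) : StrictMonoOn (foc c V S) (Ici 0) := by
  intro x hx y hy hxy
  have hcx : 0 ≤ c * x := mul_nonneg hc.le hx
  have hcxy : c * x < c * y := mul_lt_mul_of_pos_left hxy hc
  have h₁ : 0 ≤ 1 - exp (-(c * x)) := sub_nonneg.2 (exp_le_one_iff.2 (by linarith))
  have h₂ : 0 ≤ exp (c * x) - 1 := sub_nonneg.2 (one_le_exp hcx)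
  have h₃ : 1 - exp (-(c * x)) ≤ 1 - exp (-(c * y)) := by gcongr
  have h₁' : 0 ≤ 1 - exp (-(c * y)) := h₁.trans h₃
  have h₄ : (1 - exp (-(c * x))) * (exp (c * x) - 1) / S ≤
      (1 - exp (-(c * y))) * (exp (c * y) - 1) / S := by gcongr
  unfold foc
  linarith

theorem foc_le_foc_of_le (hc : 0 < c) (hx : 0 ≤ x) {S' : ℝ} (hS : 0 < S) (hSS' : S ≤ S') :
    foc c V S' x ≤ foc c V S x := by
  have hcx : 0 ≤ c * x := mul_nonneg hc.le hx
  have h₁ : 0 ≤ 1 - exp (-(c * x)) := sub_nonneg.2 (exp_le_one_iff.2 (by linarith))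
  have h₂ : 0 ≤ exp (c * x) - 1 := sub_nonneg.2 (one_le_exp hcx)
  unfold foc
  gcongr

theorem foc_nonpos (hc : 0 < c) (hx : 0 ≤ x) (hS : 0 < S) (hxS : exp (c * x) - 1 ≤ S)
    (hgap : 2 ≤ c * (V - x)) : foc c V S x ≤ 0 := by
  have h₁ : 0 ≤ 1 - exp (-(c * x)) :=
    sub_nonneg.2 (exp_le_one_iff.2 (by linarith [mul_nonneg hc.le hx]))
  have h₂ : 1 - exp (-(c * x)) ≤ 1 := by linarith [exp_pos (-(c * x))]
  -- both terms of `foc` other than `-c (V - x)` are at most `1`: this is where `2 / c` comes from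
  have h₃ : (1 - exp (-(c * x))) * (exp (c * x) - 1) / S ≤ 1 - exp (-(c * x)) := by
    rw [mul_div_assoc]
    exact mul_le_of_le_one_right h₁ ((div_le_one hS).2 hxS)
  unfold foc
  linarith

theorem hasDerivAt_utility (hS : 0 < S) (hx : 0 ≤ c * x) :
    HasDerivAt (utility c V S)
      (-(S * exp (c * x) * foc c V S x) / (exp (c * x) - 1 + S) ^ 2) x := by
  have hE : HasDerivAt (fun y => exp (c * y) - 1) (exp (c * x) * (c * 1)) x :=
    ((hasDerivAt_id' x).const_mul c).exp.sub_const 1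
  have hD : exp (c * x) - 1 + S ≠ 0 := by linarith [one_le_exp hx]
  refine ((((hasDerivAt_id' x).const_sub V).mul hE).div (hE.add_const S) hD).congr_deriv ?_
  simp only [foc, exp_neg, Pi.mul_apply]
  field_simp
  ring

theorem bddAbove_setOf_foc_nonpos : BddAbove {x ∈ Icc 0 V | foc c V S x ≤ 0} :=
  ⟨V, fun _ hx => hx.1.2⟩

theorem zero_mem_setOf_foc_nonpos (hc : 0 ≤ c) (hV : 0 ≤ V) :
    0 ∈ {x ∈ Icc 0 V | foc c V S x ≤ 0} :=
  ⟨⟨le_rfl, hV⟩, by simpa [foc] using mul_nonneg hc hV⟩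

theorem bestResponse_mem_Icc (hc : 0 ≤ c) (hV : 0 ≤ V) : bestResponse c V S ∈ Icc 0 V :=
  ⟨le_csSup bddAbove_setOf_foc_nonpos (zero_mem_setOf_foc_nonpos hc hV),
    csSup_le ⟨0, zero_mem_setOf_foc_nonpos hc hV⟩ fun _ hx => hx.1.2⟩

theorem le_bestResponse (hx : x ∈ Icc 0 V) (hfoc : foc c V S x ≤ 0) :
    x ≤ bestResponse c V S :=
  le_csSup bddAbove_setOf_foc_nonpos ⟨hx, hfoc⟩

theorem bestResponse_monotoneOn (hc : 0 < c) (hV : 0 ≤ V) :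
    MonotoneOn (bestResponse c V) (Ioi 0) := fun _ hS _ _ hSS' =>
  csSup_le_csSup bddAbove_setOf_foc_nonpos ⟨0, zero_mem_setOf_foc_nonpos hc.le hV⟩
    fun _ hx => ⟨hx.1, (foc_le_foc_of_le hc hx.1.1 hS hSS').trans hx.2⟩

theorem isMaxOn_utility_bestResponse (hc : 0 < c) (hV : 0 ≤ V) (hS : 0 < S) :
    IsMaxOn (utility c V S) (Icc 0 V) (bestResponse c V S) := by
  have hmem := bestResponse_mem_Icc (S := S) hc.le hV
  refine isMaxOn_Icc_of_hasDerivAt hmem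
    (fun x hx => (hasDerivAt_utility hS (mul_nonneg hc.le hx.1)).continuousAt.continuousWithinAt)
    (fun x hx => hasDerivAt_utility hS (mul_nonneg hc.le hx.1.le)) (fun x hx => ?_) (fun x hx => ?_)
  · obtain ⟨y, hy, hxy⟩ :=
      exists_lt_of_lt_csSup ⟨0, zero_mem_setOf_foc_nonpos hc.le hV⟩ hx.2
    have hfoc : foc c V S x < 0 := (foc_strictMonoOn hc hS hx.1.le hy.1.1 hxy).trans_le hy.2
    exact div_nonneg (neg_nonneg.2 (mul_nonpos_of_nonneg_of_nonpos (by positivity) hfoc.le))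
      (sq_nonneg _)
  · have hfoc : 0 < foc c V S x :=
      lt_of_not_ge fun h => hx.1.not_ge (le_bestResponse ⟨hmem.1.trans hx.1.le, hx.2.le⟩ h)
    exact div_nonpos_of_nonpos_of_nonneg (neg_nonpos.2 (by positivity)) (sq_nonneg _)

variable {ι : Type*} [Fintype ι] [DecidableEq ι]

def rivalWeight (c : ℝ) (b : ι → ℝ) (i : ι) : ℝ :=
  ∑ j ∈ Finset.univ.erase i, (exp (c * b j) - 1)

theorem rivalWeight_mono (hc : 0 ≤ c) (i : ι) : Monotone fun b => rivalWeight c b i :=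
  fun _ _ hbb' => Finset.sum_le_sum fun j _ => by
    gcongr
    exact hbb' j

theorem exp_mul_sub_one_le_rivalWeight (hc : 0 ≤ c) {b : ι → ℝ} (hb : 0 ≤ b) {i j : ι}
    (hji : j ≠ i) : exp (c * b j) - 1 ≤ rivalWeight c b i :=
  Finset.single_le_sum (f := fun k => exp (c * b k) - 1)
    (fun k _ => sub_nonneg.2 (one_le_exp (mul_nonneg hc (hb k))))
    (Finset.mem_erase.2 ⟨hji, Finset.mem_univ j⟩)

def IsEquilibrium (c : ℝ) (v b : ι → ℝ) : Prop :=
  ∀ i, IsMaxOn (utility c (v i) (rivalWeight c b i)) (Icc 0 (v i)) (b i)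

theorem exists_isEquilibrium_mem_Icc (hc : 0 < c) {l v : ι → ℝ} (hl : ∀ i, 0 < l i)
    (hgap : ∀ i, 2 ≤ c * (v i - l i)) (hrival : ∀ i, ∃ j ≠ i, l i ≤ l j) :
    ∃ b ∈ Icc l v, IsEquilibrium c v b := by
  have hlv : l ≤ v := fun i => by nlinarith [hgap i]
  have hweight : ∀ b ∈ Icc l v, ∀ i,
      0 < rivalWeight c b i ∧ exp (c * l i) - 1 ≤ rivalWeight c b i := by
    intro b hb i
    obtain ⟨j, hji, hlij⟩ := hrival i
    have hpos : 0 < exp (c * l i) - 1 := sub_pos.2 (one_lt_exp_iff.2 (mul_pos hc (hl i)))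
    have hle : exp (c * l i) - 1 ≤ rivalWeight c b i := calc
      exp (c * l i) - 1 ≤ exp (c * b j) - 1 := by gcongr; exact hlij.trans (hb.1 j)
      _ ≤ rivalWeight c b i :=
        exp_mul_sub_one_le_rivalWeight hc.le (fun k => (hl k).le.trans (hb.1 k)) hji
    exact ⟨hpos.trans_le hle, hle⟩
  obtain ⟨b, hb, hfix⟩ := exists_fixedPoint_of_monotoneOn_Icc hlv
    (F := fun b i => bestResponse c (v i) (rivalWeight c b i))
    (fun b hb b' hb' hbb' i => bestResponse_monotoneOn hc ((hl i).le.trans (hlv i))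
      (hweight b hb i).1 (hweight b' hb' i).1 (rivalWeight_mono hc.le i hbb'))
    (fun b hb => ⟨fun i => le_bestResponse ⟨(hl i).le, hlv i⟩
        (foc_nonpos hc (hl i).le (hweight b hb i).1 (hweight b hb i).2 (hgap i)),
      fun i => (bestResponse_mem_Icc hc.le ((hl i).le.trans (hlv i))).2⟩)
  refine ⟨b, hb, fun i => ?_⟩
  rw [← congrFun hfix i]
  exact isMaxOn_utility_bestResponse hc ((hl i).le.trans (hlv i)) (hweight b hb i).1

end QuasiProportionalAuction

end

open QuasiProportionalAuction in
theorem exists_equilibrium_with_bounds (n : ℕ) (hn : 2 ≤ n) (c : ℝ) (hc : 0 < c)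
    (v : Fin n → ℝ) (hvsorted : ∀ i j : Fin n, i ≤ j → v j ≤ v i)
    (hvbig : ∀ i, 2 / c < v i)
    (f : ℝ → ℝ) (hf : ∀ x, f x = Real.exp (c * x) - 1) :
    ∃ b : Fin n → ℝ,
      (b ⟨0, by omega⟩ ≥ v ⟨1, by omega⟩ - 2 / c) ∧
      (∀ i : Fin n, i ≠ ⟨0, by omega⟩ → b i ≥ v i - 2 / c) ∧
      (∀ i, b i ≤ v i) ∧
      (∀ i, ∀ x ∈ Set.Icc 0 (v i),
        (v i - x) * f x / (f x + ∑ j ∈ Finset.univ.erase i, f (b j)) ≤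
          (v i - b i) * f (b i) / (f (b i) + ∑ j ∈ Finset.univ.erase i, f (b j))) := by
  set i₀ : Fin n := ⟨0, by omega⟩
  set i₁ : Fin n := ⟨1, by omega⟩
  have hi₀₁ : i₀ < i₁ := Fin.mk_lt_mk.2 zero_lt_one
  have hmax : ∀ i, i ≠ i₀ → max i i₁ = i := fun i hi =>
    max_eq_left (Fin.le_def.2 (Nat.one_le_iff_ne_zero.2 fun h => hi (Fin.ext h)))
  obtain ⟨b, ⟨hlb, hbv⟩, heq⟩ := exists_isEquilibrium_mem_Icc hc
    (l := fun i => v (max i i₁) - 2 / c) (v := v) (fun i => sub_pos.2 (hvbig _))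
    (fun i => by
      have hc2 : c * (2 / c) = 2 := mul_div_cancel₀ 2 hc.ne'
      nlinarith [hvsorted i _ (le_max_left i i₁)])
    (fun i => ⟨if i = i₁ then i₀ else i₁,
      by split_ifs with h; exacts [h ▸ hi₀₁.ne, Ne.symm h],
      by split_ifs <;> simp [max_eq_right hi₀₁.le, hvsorted _ _ (le_max_right i i₁)]⟩)
  refine ⟨b, by simpa [max_eq_right hi₀₁.le] using hlb i₀,
    fun i hi => by simpa [hmax i hi] using hlb i, hbv, fun i x hx => ?_⟩
  simpa only [hf, utility, rivalWeight] using isMaxOn_iff.1 (heq i) x hx
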